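/- arXiv:2501.08823 — 2 statements merged into one kernel-verified Lean document; each statement's English description precedes it below -/
import Mathlib

section
/- For every n ≥ 1, the integer n returns to the n-th column of the Hurt-Sada array at row ⌊(n+1)φ⌋ − 1 and remains there thereafter; that is, A(j,n) = n for all j ≥ ⌊(n+1)φ⌋ − 1, and A(⌊(n+1)φ⌋ − 2, n) ≠ n. -/
/-! Write `w k = ⌊k φ⌋` for the lower Wythoff sequence. By induction on the row, the value
`v ≤ n` sits in row `n` at position `max v (w (v + 1) + v - (n + 1))`: it is dropped at
position `w (v + 1) - 1` in row `v` and then moves one place left per row until it reaches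
position `v`, where it stays. The remaining positions carry the values `> n` in increasing
order. Since `1/φ = φ - 1`, the inequality `w a ≤ b` is equivalent to `a + b + 1 ≤ w (b + 1)`;
with it one checks that the first of those remaining positions, where `n + 1` is found, is
`w (n + 2) - (n + 2)`, and that moving `n + 1` by `n + 1` places preserves the description.
Reading it off for `v = n` gives the theorem. -/

/-- The golden ratio `(1 + √5)/2`. -/
noncomputable def phi : ℝ := (1 + Real.sqrt 5) / 2

/-- The Hurt-Sada array `A : ℕ → ℕ → ℕ`.  Row `0` is the identity sequence;
row `n+1` is obtained from row `n` by moving the entry `n+1` (located at the unique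
position `p` with `A n p = n+1`) by `n+1` places to the right, shifting the jumped-over
entries one place left. -/
noncomputable def A : ℕ → ℕ → ℕ
  | 0, k => k
  | n + 1, j =>
    let p := sInf {i | A n i = n + 1}
    if j < p then A n j
    else if j < p + (n + 1) then A n (j + 1)
    else if j = p + (n + 1) then n + 1
    else A n j

open Real goldenRatio

lemma phi_eq_goldenRatio : phi = φ := rfl

noncomputable def lowerWythoff (k : ℕ) : ℕ := ⌊(k : ℝ) * φ⌋₊

lemma lowerWythoff_le_iff {a b : ℕ} : lowerWythoff a ≤ b ↔ (a : ℝ) * φ < b + 1 := by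
  rw [lowerWythoff, ← Nat.lt_succ_iff, Nat.floor_lt (by positivity)]
  push_cast
  rfl

lemma le_lowerWythoff_iff {a b : ℕ} (ha : a ≠ 0) : b ≤ lowerWythoff a ↔ (b : ℝ) < a * φ := by
  rw [lowerWythoff, Nat.le_floor_iff (by positivity)]
  exact ⟨fun h => h.lt_of_ne ((goldenRatio_irrational.natCast_mul ha).ne_nat b).symm, le_of_lt⟩

lemma lowerWythoff_le_iff_add_le (a b : ℕ) :
    lowerWythoff a ≤ b ↔ a + b + 1 ≤ lowerWythoff (b + 1) := by
  rw [lowerWythoff_le_iff, le_lowerWythoff_iff b.succ_ne_zero]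
  push_cast
  have hφ : 0 < φ - 1 := sub_pos.2 one_lt_goldenRatio
  have hsq := goldenRatio_sq
  constructor
  · intro h
    nlinarith [mul_lt_mul_of_pos_right h hφ]
  · intro h
    nlinarith [mul_lt_mul_of_pos_right h goldenRatio_pos]

lemma lowerWythoff_mono : Monotone lowerWythoff :=
  fun _ _ h => Nat.floor_le_floor (by gcongr)

lemma lowerWythoff_one : lowerWythoff 1 = 1 := by
  rw [le_antisymm_iff, lowerWythoff_le_iff, le_lowerWythoff_iff one_ne_zero]
  push_cast
  exact ⟨by linarith [goldenRatio_lt_two], by linarith [one_lt_goldenRatio]⟩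

lemma add_one_le_lowerWythoff {k : ℕ} (hk : 2 ≤ k) : k + 1 ≤ lowerWythoff k := by
  rw [le_lowerWythoff_iff (by omega)]
  have hk' : (2 : ℝ) ≤ k := by exact_mod_cast hk
  have hφ : 3 / 2 < φ := by
    by_contra! h
    nlinarith [goldenRatio_sq, goldenRatio_lt_two, mul_le_mul_of_nonneg_right h goldenRatio_pos.le]
  push_cast
  nlinarith

lemma lowerWythoff_lt_two_mul {k : ℕ} (hk : k ≠ 0) : lowerWythoff k < 2 * k := by
  have hk' : (0 : ℝ) < k := by positivity
  rw [lowerWythoff, Nat.floor_lt (by positivity)]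
  push_cast
  nlinarith [goldenRatio_lt_two]

lemma lowerWythoff_succ_le_iff_lt {n p j : ℕ} (hp : p + (n + 2) = lowerWythoff (n + 2)) :
    lowerWythoff (j + 1) ≤ n + 1 ↔ j < p := by
  rw [lowerWythoff_le_iff_add_le, show n + 1 + 1 = n + 2 from rfl]
  omega

section Rows

variable {n p v j k : ℕ}

noncomputable def slot (n v : ℕ) : ℕ := max v (lowerWythoff (v + 1) + v - (n + 1))

lemma slot_of_le (h : lowerWythoff (v + 1) ≤ n + 1) : slot n v = v := by
  unfold slot
  omega

def IsFree (n j : ℕ) : Prop := ∀ v ≤ n, slot n v ≠ j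

lemma isFree_of_add_eq (hp : p + (n + 2) = lowerWythoff (n + 2)) : IsFree n p := by
  intro v _ hv
  have hret := lowerWythoff_succ_le_iff_lt hp (j := v)
  unfold slot at hv
  omega

lemma slot_succ_self (hp : p + (n + 2) = lowerWythoff (n + 2)) :
    slot (n + 1) (n + 1) = p + (n + 1) := by
  have := add_one_le_lowerWythoff (k := n + 2) (by omega)
  unfold slot
  rw [show n + 1 + 1 = n + 2 from rfl]
  omega

def cycleShift (p P j : ℕ) : ℕ :=
  if j < p then j else if j < P then j + 1 else if j = P then p else j

lemma cycleShift_bijective {P : ℕ} (h : p ≤ P) : Function.Bijective (cycleShift p P) := by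
  refine ⟨fun a b hab => ?_, fun b => ?_⟩
  · unfold cycleShift at hab
    split_ifs at hab <;> omega
  · refine ⟨if b < p then b else if b = p then P else if b ≤ P then b - 1 else b, ?_⟩
    unfold cycleShift
    split_ifs <;> omega

lemma cycleShift_lt_cycleShift {P : ℕ} (hjk : j < k) (hj : j ≠ P) (hk : k ≠ P) :
    cycleShift p P j < cycleShift p P k := by
  unfold cycleShift
  split_ifs <;> omega

lemma slot_succ (hp : p + (n + 2) = lowerWythoff (n + 2)) (hv : v ≤ n) :
    cycleShift p (p + (n + 1)) (slot (n + 1) v) = slot n v := by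
  have hmono : lowerWythoff (v + 1) ≤ lowerWythoff (n + 2) := lowerWythoff_mono (by omega)
  have hret := lowerWythoff_succ_le_iff_lt hp (j := v)
  unfold slot cycleShift
  split_ifs <;> omega

structure RowInvariant (n : ℕ) : Prop where
  apply_slot : ∀ v ≤ n, A n (slot n v) = v
  bijective : Function.Bijective (A n)
  strictMonoOn : StrictMonoOn (A n) {j | IsFree n j}

namespace RowInvariant

lemma lt_apply_of_isFree (h : RowInvariant n) (hj : IsFree n j) : n < A n j := by
  by_contra! hle
  exact hj _ hle (h.bijective.injective (h.apply_slot _ hle))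

lemma apply_eq_succ (h : RowInvariant n) (hp : p + (n + 2) = lowerWythoff (n + 2)) :
    A n p = n + 1 := by
  have hpn : p ≤ n + 1 := by have := lowerWythoff_lt_two_mul (k := n + 2) (by omega); omega
  obtain ⟨i, hi⟩ := h.bijective.surjective (n + 1)
  have hpi : p ≤ i := by
    by_contra! hip
    have hslot := h.apply_slot i (by omega)
    rw [slot_of_le ((lowerWythoff_succ_le_iff_lt hp).2 hip), hi] at hslot
    omega
  have hfree : IsFree n i := fun v hv hvi => by
    have := h.apply_slot v hv
    rw [hvi, hi] at this
    omega
  rcases hpi.lt_or_eq with hlt | rfl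
  · have := h.strictMonoOn (isFree_of_add_eq hp) hfree hlt
    have := h.lt_apply_of_isFree (isFree_of_add_eq hp)
    omega
  · exact hi

lemma A_succ_eq_comp (h : RowInvariant n) (hp : p + (n + 2) = lowerWythoff (n + 2)) :
    A (n + 1) = A n ∘ cycleShift p (p + (n + 1)) := by
  have hAp := h.apply_eq_succ hp
  have hset : {i | A n i = n + 1} = {p} :=
    Set.ext fun i => ⟨fun hi => h.bijective.injective (hi.trans hAp.symm), fun hi => hi ▸ hAp⟩
  funext j
  simp only [A, hset, csInf_singleton, Function.comp, cycleShift]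
  split_ifs <;> simp [hAp]

lemma succ (h : RowInvariant n) : RowInvariant (n + 1) := by
  obtain ⟨p, hp⟩ : ∃ p, p + (n + 2) = lowerWythoff (n + 2) :=
    ⟨lowerWythoff (n + 2) - (n + 2), by have := add_one_le_lowerWythoff (k := n + 2); omega⟩
  have hA := h.A_succ_eq_comp hp
  have hσ := cycleShift_bijective (p := p) (P := p + (n + 1)) (by omega)
  have hP := slot_succ_self hp
  refine ⟨fun v hv => ?_, hA ▸ h.bijective.comp hσ, fun j hj k hk hjk => ?_⟩
  · rcases hv.lt_or_eq with hv | rfl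
    · rw [hA, Function.comp, slot_succ hp (by omega)]
      exact h.apply_slot v (by omega)
    · rw [hA, Function.comp, hP, cycleShift, if_neg (by omega), if_neg (by omega), if_pos rfl]
      exact h.apply_eq_succ hp
  · have hjP : j ≠ p + (n + 1) := fun e => hj (n + 1) le_rfl (hP.trans e.symm)
    have hkP : k ≠ p + (n + 1) := fun e => hk (n + 1) le_rfl (hP.trans e.symm)
    have hfree : ∀ m, IsFree (n + 1) m → IsFree n (cycleShift p (p + (n + 1)) m) :=
      fun m hm v hv hvm => hm v (by omega) (hσ.injective ((slot_succ hp hv).trans hvm))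
    rw [hA]
    exact h.strictMonoOn (hfree j hj) (hfree k hk) (cycleShift_lt_cycleShift hjk hjP hkP)

end RowInvariant

lemma rowInvariant_zero : RowInvariant 0 := by
  have hA : A 0 = id := funext fun k => by rw [A]; rfl
  refine ⟨fun v hv => ?_, hA ▸ Function.bijective_id, hA ▸ strictMono_id.strictMonoOn _⟩
  rw [Nat.le_zero.1 hv, slot_of_le (by rw [lowerWythoff_one]), hA, id]

lemma rowInvariant (n : ℕ) : RowInvariant n := by
  induction n with
  | zero => exact rowInvariant_zero
  | succ n ih => exact ih.succ

end Rows

theorem hurt_sada_returns (n : ℕ) (hn : 1 ≤ n) :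
    (∀ j, ⌊((n : ℝ) + 1) * phi⌋₊ - 1 ≤ j → A j n = n) ∧
      A (⌊((n : ℝ) + 1) * phi⌋₊ - 2) n ≠ n := by
  have hw : ⌊((n : ℝ) + 1) * phi⌋₊ = lowerWythoff (n + 1) := by
    rw [lowerWythoff, phi_eq_goldenRatio]
    push_cast
    rfl
  have hn2 : n + 2 ≤ lowerWythoff (n + 1) := add_one_le_lowerWythoff (by omega)
  rw [hw]
  refine ⟨fun j hj => ?_, fun hA => ?_⟩
  · have := (rowInvariant j).apply_slot n (by omega)
    rwa [slot_of_le (by omega)] at this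
  · have h := rowInvariant (lowerWythoff (n + 1) - 2)
    have hslot : slot (lowerWythoff (n + 1) - 2) n = n + 1 := by
      unfold slot
      omega
    have hA' := h.apply_slot n (by omega)
    rw [hslot] at hA'
    have := h.bijective.injective (hA.trans hA'.symm)
    omega
end

section
/- For every n ≥ 1, Sada's sequence s(n) satisfies: if {(n+1)φ} < 2 − φ then s(n) = n + 1, and otherwise s(n) = ⌊(n+1)/φ⌋. -/
/-- `p n` is the (unique) position of `n` in row `n-1` of the Hurt-Sada array. -/
noncomputable def p (n : ℕ) : ℕ := sInf {i | A (n - 1) i = n}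

/-- Sada's sequence: `s n` is the first element that `n` jumps over. -/
noncomputable def s (n : ℕ) : ℕ := A (n - 1) (p n + 1)

lemma phi_pos : 0 < phi := Real.goldenRatio_pos

lemma phi_sq : phi ^ 2 = phi + 1 := Real.goldenRatio_sq

lemma eight_div_five_lt_phi : (8 / 5 : ℝ) < phi := by
  unfold phi; nlinarith [Real.sq_sqrt (show (0 : ℝ) ≤ 5 by norm_num), Real.sqrt_nonneg 5]

lemma phi_lt_thirteen_div_eight : phi < 13 / 8 := by
  unfold phi; nlinarith [Real.sq_sqrt (show (0 : ℝ) ≤ 5 by norm_num), Real.sqrt_nonneg 5]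

lemma intCast_mul_phi_ne_natCast_succ (m : ℤ) (v : ℕ) : (m : ℝ) * phi ≠ v + 1 := by
  rcases eq_or_ne m 0 with rfl | hm
  · rw [Int.cast_zero, zero_mul]; positivity
  · exact_mod_cast (Real.goldenRatio_irrational.intCast_mul hm).ne_nat (v + 1)

-- The index from which `v` jumps, see `p_succ`.
noncomputable def jumpStart (v : ℕ) : ℕ := ⌊((v : ℝ) + 1) / phi⌋₊

lemma intCast_le_jumpStart_iff {m : ℤ} {v : ℕ} :
    m ≤ jumpStart v ↔ (m : ℝ) * phi < v + 1 := by
  rw [jumpStart, Int.natCast_floor_eq_floor (div_nonneg (by positivity) phi_pos.le),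
    Int.le_floor, le_div_iff₀ phi_pos]
  exact le_iff_lt_or_eq.trans (or_iff_left (intCast_mul_phi_ne_natCast_succ m v))

lemma jumpStart_le_intCast_iff {m : ℤ} {v : ℕ} :
    jumpStart v ≤ m ↔ (v : ℝ) + 1 < (m + 1) * phi := by
  rw [← Int.lt_add_one_iff, ← not_le, intCast_le_jumpStart_iff, not_lt]
  have hne := (intCast_mul_phi_ne_natCast_succ (m + 1) v).symm
  push_cast at hne ⊢
  exact le_iff_lt_or_eq.trans (or_iff_left hne)

lemma jumpStart_mul_phi_lt (v : ℕ) : (jumpStart v : ℝ) * phi < v + 1 := by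
  exact_mod_cast intCast_le_jumpStart_iff.1 le_rfl

lemma lt_jumpStart_add_one_mul_phi (v : ℕ) : (v : ℝ) + 1 < (jumpStart v + 1) * phi := by
  exact_mod_cast jumpStart_le_intCast_iff.1 le_rfl

lemma jumpStart_le_self (v : ℕ) : jumpStart v ≤ v := by
  have := jumpStart_le_intCast_iff (m := v) (v := v) |>.2 (by
    push_cast; nlinarith [eight_div_five_lt_phi])
  omega

section
variable {n v : ℕ}

lemma lt_jumpStart_succ_of_jumpStart_add_le (h : jumpStart v + v ≤ n) :
    v < jumpStart (n + 1) := by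
  have hr : (jumpStart v : ℝ) + v ≤ n := by exact_mod_cast h
  have := intCast_le_jumpStart_iff (m := v + 1) (v := n + 1) |>.2 (by
    push_cast; nlinarith [lt_jumpStart_add_one_mul_phi v, phi_sq, eight_div_five_lt_phi])
  omega

lemma jumpStart_succ_add_lt_of_lt_jumpStart_add (h : n < jumpStart v + v) :
    jumpStart (n + 1) + n < 2 * v + jumpStart v := by
  have hr : (n : ℝ) + 1 ≤ jumpStart v + v := by exact_mod_cast h
  have := jumpStart_le_intCast_iff (m := 2 * v + jumpStart v - n - 1) (v := n + 1) |>.2 (by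
    push_cast; nlinarith [jumpStart_mul_phi_lt v, phi_sq, eight_div_five_lt_phi])
  omega

lemma two_mul_add_jumpStart_le_of_le (h : v ≤ n) :
    2 * v + jumpStart v ≤ jumpStart (n + 1) + 2 * n + 1 := by
  have hr : (v : ℝ) ≤ n := by exact_mod_cast h
  have := intCast_le_jumpStart_iff (m := 2 * v + jumpStart v - 2 * n - 1) (v := n + 1) |>.2 (by
    push_cast; nlinarith [jumpStart_mul_phi_lt v, phi_sq, eight_div_five_lt_phi])
  omega

lemma jumpStart_succ_add_lt_of_add_two_le (h : n + 2 ≤ v) :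
    jumpStart (n + 1) + n + 1 < v + jumpStart v := by
  have hr : (n : ℝ) + 2 ≤ v := by exact_mod_cast h
  have := jumpStart_le_intCast_iff (m := v + jumpStart v - n - 2) (v := n + 1) |>.2 (by
    push_cast; nlinarith [lt_jumpStart_add_one_mul_phi v, phi_sq, eight_div_five_lt_phi])
  omega

lemma add_jumpStart_le_of_jumpStart_le (h : jumpStart v ≤ n) :
    v + jumpStart v ≤ jumpStart (n + 1) + 2 * n + 2 := by
  have hr : (jumpStart v : ℝ) ≤ n := by exact_mod_cast h
  have := intCast_le_jumpStart_iff (m := v + jumpStart v - 2 * n - 2) (v := n + 1) |>.2 (by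
    push_cast; nlinarith [lt_jumpStart_add_one_mul_phi v, phi_sq, eight_div_five_lt_phi])
  omega

lemma jumpStart_succ_lt_and_le_of_jumpStart_eq (h : jumpStart v = n + 1) (hv : n + 2 ≤ v) :
    jumpStart (n + 1) < v ∧ v ≤ jumpStart (n + 1) + n + 1 := by
  have hr : (n : ℝ) + 2 ≤ v := by exact_mod_cast hv
  have hlo := jumpStart_mul_phi_lt v
  have hhi := lt_jumpStart_add_one_mul_phi v
  rw [h] at hlo hhi
  push_cast at hlo hhi
  have h1 := jumpStart_le_intCast_iff (m := v - 1) (v := n + 1) |>.2 (by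
    push_cast; nlinarith [phi_sq, eight_div_five_lt_phi])
  have h2 := intCast_le_jumpStart_iff (m := v - n - 1) (v := n + 1) |>.2 (by
    push_cast; nlinarith [phi_sq, eight_div_five_lt_phi])
  omega

lemma jumpStart_succ_add_lt_of_add_two_le_jumpStart (h : n + 2 ≤ jumpStart v) :
    jumpStart (n + 1) + n + 1 < v := by
  have hr : (n : ℝ) + 2 ≤ jumpStart v := by exact_mod_cast h
  have := jumpStart_le_intCast_iff (m := v - n - 2) (v := n + 1) |>.2 (by
    push_cast; nlinarith [jumpStart_mul_phi_lt v, phi_sq, eight_div_five_lt_phi])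
  omega

end

-- Where the entry at index `j` of row `n` lands in row `n + 1`, if `n + 1` jumps from index `P`.
def jump (P n j : ℕ) : ℕ :=
  if j = P then P + n + 1 else if P < j ∧ j ≤ P + n + 1 then j - 1 else j

lemma jump_surjective (P n : ℕ) : Function.Surjective (jump P n) := fun j =>
  ⟨if j < P then j else if j < P + n + 1 then j + 1 else if j = P + n + 1 then P else j, by
    unfold jump; split_ifs <;> omega⟩

lemma A_succ_jump {n P : ℕ} (hP : IsLeast {i | A n i = n + 1} P) (j : ℕ) :
    A (n + 1) (jump P n j) = A n j := by
  rw [A, hP.csInf_eq]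
  unfold jump
  split_ifs <;> first | omega | rfl | (subst_vars; exact hP.1.symm) | (congr 1; omega)

-- Before its own jump `v` is overtaken by the values `jumpStart v, …, v - 1`, afterwards by
-- `v + 1, …, v + jumpStart v`.
noncomputable def position (n v : ℕ) : ℕ :=
  if v ≤ n then v + (jumpStart v + v - n) else v - (n + 1 - jumpStart v)

lemma position_zero (v : ℕ) : position 0 v = v := by
  rcases Nat.eq_zero_or_pos v with rfl | hv
  · have := jumpStart_le_self 0
    unfold position; split_ifs <;> omega
  · have hv' : (1 : ℝ) ≤ v := by exact_mod_cast hv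
    have := intCast_le_jumpStart_iff (m := 1) (v := v) |>.2 (by
      push_cast; linarith [phi_lt_thirteen_div_eight])
    unfold position; split_ifs <;> omega

lemma position_self_succ (n : ℕ) : position n (n + 1) = jumpStart (n + 1) := by
  have := jumpStart_le_self (n + 1)
  unfold position; split_ifs <;> omega

lemma position_succ (n v : ℕ) :
    position (n + 1) v = jump (jumpStart (n + 1)) n (position n v) := by
  have := jumpStart_le_self v
  have := jumpStart_le_self (n + 1)
  rcases lt_trichotomy v (n + 1) with h | rfl | h
  · by_cases hc : jumpStart v + v ≤ n
    · have := lt_jumpStart_succ_of_jumpStart_add_le hc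
      unfold position jump; split_ifs <;> omega
    · have := jumpStart_succ_add_lt_of_lt_jumpStart_add (n := n) (v := v) (by omega)
      have := two_mul_add_jumpStart_le_of_le (n := n) (v := v) (by omega)
      unfold position jump; split_ifs <;> omega
  · unfold position jump; split_ifs <;> omega
  · rcases lt_trichotomy (jumpStart v) (n + 1) with h' | h' | h'
    · have := jumpStart_succ_add_lt_of_add_two_le (n := n) (v := v) (by omega)
      have := add_jumpStart_le_of_jumpStart_le (n := n) (v := v) (by omega)
      unfold position jump; split_ifs <;> omega
    · have := jumpStart_succ_lt_and_le_of_jumpStart_eq h' (by omega)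
      unfold position jump; split_ifs <;> omega
    · have := jumpStart_succ_add_lt_of_add_two_le_jumpStart (n := n) (v := v) (by omega)
      unfold position jump; split_ifs <;> omega

lemma position_surjective (n : ℕ) : Function.Surjective (position n) := by
  induction n with
  | zero => exact fun j => ⟨j, position_zero j⟩
  | succ n ih =>
    rw [show position (n + 1) = jump (jumpStart (n + 1)) n ∘ position n from
      funext (position_succ n)]
    exact (jump_surjective _ _).comp ih

lemma setOf_A_eq_of_A_position {n : ℕ} (h : ∀ v, A n (position n v) = v) (v : ℕ) :
    {i | A n i = v} = {position n v} := by
  ext i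
  obtain ⟨w, rfl⟩ := position_surjective n i
  simp only [Set.mem_ofPred_eq, Set.mem_singleton_iff, h]
  exact ⟨fun hw => hw ▸ rfl, fun hw => by rw [← h w, hw, h]⟩

lemma A_position (n v : ℕ) : A n (position n v) = v := by
  induction n generalizing v with
  | zero => rw [position_zero]; rfl
  | succ n ih =>
    have hP : IsLeast {i | A n i = n + 1} (jumpStart (n + 1)) := by
      rw [setOf_A_eq_of_A_position ih, position_self_succ]
      exact isLeast_singleton
    rw [position_succ, A_succ_jump hP, ih]

lemma setOf_A_eq (n v : ℕ) : {i | A n i = v} = {position n v} :=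
  setOf_A_eq_of_A_position (A_position n) v

lemma p_succ (n : ℕ) : p (n + 1) = jumpStart (n + 1) := by
  rw [p, Nat.add_sub_cancel, setOf_A_eq, csInf_singleton, position_self_succ]

lemma s_succ_eq_of_position_eq {n v : ℕ} (h : position n v = jumpStart (n + 1) + 1) :
    s (n + 1) = v := by
  rw [s, p_succ, Nat.add_sub_cancel, ← h, A_position]

lemma floor_succ_mul_phi (v : ℕ) : ⌊((v : ℝ) + 1) * phi⌋ = v + 1 + jumpStart v := by
  have hlo := jumpStart_mul_phi_lt v
  have hhi := lt_jumpStart_add_one_mul_phi v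
  rw [Int.floor_eq_iff]
  push_cast
  constructor <;> nlinarith [phi_sq, eight_div_five_lt_phi]

lemma fract_succ_mul_phi (v : ℕ) :
    Int.fract (((v : ℝ) + 1) * phi) = ((v : ℝ) + 1) * phi - (v + 1 + jumpStart v) := by
  rw [Int.fract, floor_succ_mul_phi]
  push_cast
  ring

lemma jumpStart_succ_of_fract_lt {v : ℕ} (h : Int.fract (((v : ℝ) + 1) * phi) < 2 - phi) :
    jumpStart (v + 1) = jumpStart v := by
  rw [fract_succ_mul_phi] at h
  have hlo := jumpStart_mul_phi_lt v
  have h1 := jumpStart_le_intCast_iff (m := jumpStart v) (v := v + 1) |>.2 (by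
    push_cast; nlinarith [phi_sq, eight_div_five_lt_phi, mul_lt_mul_of_pos_right h phi_pos])
  have h2 := intCast_le_jumpStart_iff (m := jumpStart v) (v := v + 1) |>.2 (by
    push_cast; linarith)
  omega

lemma jumpStart_jumpStart_add_of_not_fract_lt {v : ℕ}
    (h : ¬ Int.fract (((v : ℝ) + 1) * phi) < 2 - phi) :
    jumpStart (jumpStart v) + jumpStart v = v := by
  rw [fract_succ_mul_phi, not_lt] at h
  have hne := intCast_mul_phi_ne_natCast_succ (v + 2) (v + 2 + jumpStart v)
  push_cast at hne
  have hlt : (v : ℝ) + 3 + jumpStart v < (v + 2) * phi := lt_of_le_of_ne (by linarith)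
    (fun he => hne (by linarith))
  have hlo := jumpStart_mul_phi_lt v
  have hhi := lt_jumpStart_add_one_mul_phi v
  have h1 := jumpStart_le_intCast_iff (m := v - jumpStart v) (v := jumpStart v) |>.2 (by
    push_cast; nlinarith [phi_sq, eight_div_five_lt_phi, mul_lt_mul_of_pos_right hlt phi_pos])
  have h2 := intCast_le_jumpStart_iff (m := v - jumpStart v) (v := jumpStart v) |>.2 (by
    push_cast; nlinarith [phi_sq, eight_div_five_lt_phi, mul_lt_mul_of_pos_right hlt phi_pos])
  omega

theorem sada_sequence_formula (n : ℕ) (hn : 1 ≤ n) :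
    (Int.fract (((n : ℝ) + 1) * phi) < 2 - phi → s n = n + 1) ∧
      (¬ Int.fract (((n : ℝ) + 1) * phi) < 2 - phi → s n = ⌊((n : ℝ) + 1) / phi⌋₊) := by
  obtain ⟨m, rfl⟩ := Nat.exists_eq_add_of_le' hn
  have hle := jumpStart_le_self (m + 1)
  refine ⟨fun h => s_succ_eq_of_position_eq ?_, fun h => s_succ_eq_of_position_eq ?_⟩
  · have := jumpStart_succ_of_fract_lt h
    unfold position; split_ifs <;> omega
  · have hsum := jumpStart_jumpStart_add_of_not_fract_lt h
    have hne : jumpStart (m + 1) ≠ m + 1 := fun he => by rw [he] at hsum; omega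
    change position m (jumpStart (m + 1)) = _
    unfold position; split_ifs <;> omega
end
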